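/- arXiv:1502.05133 — 7 statements merged into one kernel-verified Lean document; each statement's English description precedes it below -/
import Mathlib

section
/- Let 𝕜 be a complete nontrivially normed field which is locally compact (i.e. a proper metric space), let n ≥ 1, and let t be an n×n matrix over 𝕜 with trace 0. Suppose (h_α)_{α∈ℕ} is a sequence in SL_n(𝕜) such that ‖h_α t h_α⁻¹‖ → ∞ as α → ∞. Then there exist a strictly increasing sequence of indices (α_j), a sequence (λ_j) in 𝕜 with λ_j → 0, and a nonzero nilpotent n×n matrix v over 𝕜 (i.e. v ≠ 0 and v^n = 0) such that h_{α_j} (λ_j t) h_{α_j}⁻¹ → v as j → ∞. -/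
open Filter Topology Matrix Polynomial

attribute [local instance] Matrix.normedAddCommGroup Matrix.normedSpace

/-!
Rescale the conjugates `g α = h α * t * (h α)⁻¹` by scalars `λ α` so that `λ α • g α` lies in the
shell `‖c‖⁻¹ ≤ ‖·‖ ≤ 1`; as `‖g α‖ → ∞`, this forces `λ α → 0`. By compactness a subsequence
converges to some `v`, which is nonzero because of the shell. Every `g α` is a root of the
characteristic polynomial `χ` of `t`, so `λ α • g α` is a root of `χ.scaleRoots (λ α)`; these
polynomials tend to `X ^ n`, hence `v ^ n = 0`.
-/

theorem Polynomial.Monic.scaleRoots_zero {R : Type*} [Semiring R] {p : R[X]} (hp : p.Monic) :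
    p.scaleRoots 0 = X ^ p.natDegree := by
  ext k
  rcases lt_trichotomy k p.natDegree with hk | rfl | hk
  · simp [coeff_X_pow, hk.ne]
  · simpa using hp.leadingCoeff
  · simp [coeff_X_pow, hk.ne']

theorem Polynomial.continuous_aeval_scaleRoots {R A : Type*} [CommSemiring R] [TopologicalSpace R]
    [IsTopologicalSemiring R] [Semiring A] [TopologicalSpace A] [IsTopologicalSemiring A]
    [Algebra R A] [ContinuousSMul R A] (p : R[X]) :
    Continuous fun sx : R × A => aeval sx.2 (p.scaleRoots sx.1) := by
  have hdeg (s : R) : (p.scaleRoots s).natDegree < p.natDegree + 1 := by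
    rw [natDegree_scaleRoots]; exact Nat.lt_succ_self _
  simp_rw [aeval_eq_sum_range' (hdeg _), coeff_scaleRoots]
  fun_prop

theorem Polynomial.pow_natDegree_eq_zero_of_tendsto_smul {R A ι : Type*} [CommRing R]
    [TopologicalSpace R] [IsTopologicalRing R] [Ring A] [TopologicalSpace A]
    [IsTopologicalRing A] [T2Space A] [Algebra R A] [ContinuousSMul R A]
    {p : R[X]} (hp : p.Monic) {l : Filter ι} [l.NeBot] {c : ι → R} {a : ι → A} {v : A}
    (hc : Tendsto c l (𝓝 0)) (ha : ∀ i, aeval (a i) p = 0)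
    (hv : Tendsto (fun i => c i • a i) l (𝓝 v)) :
    v ^ p.natDegree = 0 := by
  have hlim := ((continuous_aeval_scaleRoots p).tendsto (0, v)).comp (hc.prodMk_nhds hv)
  have hzero (i : ι) : aeval (c i • a i) (p.scaleRoots (c i)) = 0 := by
    rw [Algebra.smul_def]; exact scaleRoots_aeval_eq_zero (ha i)
  simp only [Function.comp_def, hzero, hp.scaleRoots_zero, aeval_X_pow] at hlim
  exact tendsto_nhds_unique hlim tendsto_const_nhds

theorem Matrix.aeval_conj_charpoly {R m : Type*} [CommRing R] [Fintype m] [DecidableEq m]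
    {H : Matrix m m R} (hH : IsUnit H.det) (M : Matrix m m R) :
    aeval (H * M * H⁻¹) M.charpoly = 0 := by
  obtain ⟨U, rfl⟩ := (isUnit_iff_isUnit_det H).mpr hH
  rw [← charpoly_units_conj U M]
  exact aeval_self_charpoly _

theorem exists_tendsto_zero_smul_norm_mem_Icc {𝕜 E ι : Type*} [NontriviallyNormedField 𝕜]
    [NormedAddCommGroup E] [NormedSpace 𝕜 E] {l : Filter ι} {g : ι → E}
    (hg : Tendsto (fun i => ‖g i‖) l atTop) {c : 𝕜} (hc : 1 < ‖c‖) :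
    ∃ lam : ι → 𝕜, Tendsto lam l (𝓝 0) ∧ ∀ᶠ i in l, ‖lam i • g i‖ ∈ Set.Icc ‖c‖⁻¹ 1 := by
  have hshell (i : ι) : ∃ d : 𝕜, g i ≠ 0 → ‖d‖ ≤ ‖g i‖⁻¹ ∧ ‖d • g i‖ ∈ Set.Icc ‖c‖⁻¹ 1 := by
    by_cases hgi : g i = 0
    · exact ⟨0, fun h => (h hgi).elim⟩
    obtain ⟨d, -, hlt, hge, -⟩ := rescale_to_shell hc one_pos hgi
    refine ⟨d, fun _ => ⟨?_, by simpa using hge, hlt.le⟩⟩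
    rw [norm_smul] at hlt
    rw [← one_div, le_div_iff₀ (norm_pos_iff.mpr hgi)]
    exact hlt.le
  choose lam hlam using hshell
  have hne : ∀ᶠ i in l, g i ≠ 0 :=
    (hg.eventually_gt_atTop 0).mono fun _ h => norm_pos_iff.mp h
  refine ⟨lam, squeeze_zero_norm' (hne.mono fun i hi => (hlam i hi).1)
    (tendsto_inv_atTop_zero.comp hg), hne.mono fun i hi => (hlam i hi).2⟩

theorem statement0_general {𝕜 : Type*} [NontriviallyNormedField 𝕜] [ProperSpace 𝕜]
    {n : ℕ} (t : Matrix (Fin n) (Fin n) 𝕜)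
    (h : ℕ → Matrix (Fin n) (Fin n) 𝕜) (hSL : ∀ α, (h α).det = 1)
    (hdiv : Tendsto (fun α => ‖h α * t * (h α)⁻¹‖) atTop atTop) :
    ∃ (φ : ℕ → ℕ) (lam : ℕ → 𝕜) (v : Matrix (Fin n) (Fin n) 𝕜),
      StrictMono φ ∧ Tendsto lam atTop (𝓝 0) ∧ v ≠ 0 ∧ v ^ n = 0 ∧
      Tendsto (fun j => h (φ j) * (lam j • t) * (h (φ j))⁻¹) atTop (𝓝 v) := by
  -- The sup-norm topology is the product topology, but instance search does not see through that.
  have : ProperSpace (Matrix (Fin n) (Fin n) 𝕜) :=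
    inferInstanceAs (ProperSpace (Fin n → Fin n → 𝕜))
  have : @IsTopologicalRing (Matrix (Fin n) (Fin n) 𝕜)
      PseudoMetricSpace.toUniformSpace.toTopologicalSpace _ :=
    Matrix.topologicalRing
  obtain ⟨c, hc⟩ := NormedField.exists_one_lt_norm 𝕜
  obtain ⟨lam, hlam, hshell⟩ := exists_tendsto_zero_smul_norm_mem_Icc hdiv hc
  obtain ⟨v, -, φ, hφ, hv⟩ :=
    (isCompact_closedBall (0 : Matrix (Fin n) (Fin n) 𝕜) 1).tendsto_subseq'
      (hshell.mono fun α hα => mem_closedBall_zero_iff.mpr hα.2).frequently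
  have hconj (α : ℕ) : h α * (lam α • t) * (h α)⁻¹ = lam α • (h α * t * (h α)⁻¹) := by
    rw [Matrix.mul_smul, Matrix.smul_mul]
  have hv' : Tendsto (fun j => h (φ j) * (lam (φ j) • t) * (h (φ j))⁻¹) atTop (𝓝 v) := by
    simp only [hconj]
    exact hv
  refine ⟨φ, lam ∘ φ, v, hφ, hlam.comp hφ.tendsto_atTop, ?_, ?_, hv'⟩
  · have hnorm : ‖c‖⁻¹ ≤ ‖v‖ :=
      ge_of_tendsto hv.norm (hφ.tendsto_atTop.eventually (hshell.mono fun _ hα => hα.1))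
    exact norm_pos_iff.mp ((inv_pos.mpr (one_pos.trans hc)).trans_le hnorm)
  · simpa [charpoly_natDegree_eq_dim] using
      pow_natDegree_eq_zero_of_tendsto_smul t.charpoly_monic (hlam.comp hφ.tendsto_atTop)
        (fun j => aeval_conj_charpoly (H := h (φ j)) (by simp [hSL]) t) hv

/-- **Lemma 9.2 (first part).** If `t` is a traceless `n × n` matrix over a locally compact
complete nontrivially normed field `𝕜` and `h α` is a sequence of determinant-one matrices
with `‖h α * t * (h α)⁻¹‖ → ∞`, then along a subsequence one can rescale by scalars
`λ_j → 0` so that the conjugates converge to a nonzero nilpotent matrix `v`. -/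
theorem statement0 {𝕜 : Type*} [NontriviallyNormedField 𝕜] [CompleteSpace 𝕜] [ProperSpace 𝕜]
    {n : ℕ} (hn : 1 ≤ n) (t : Matrix (Fin n) (Fin n) 𝕜) (ht : Matrix.trace t = 0)
    (h : ℕ → Matrix (Fin n) (Fin n) 𝕜) (hSL : ∀ α, (h α).det = 1)
    (hdiv : Tendsto (fun α => ‖h α * t * (h α)⁻¹‖) atTop atTop) :
    ∃ (φ : ℕ → ℕ) (lam : ℕ → 𝕜) (v : Matrix (Fin n) (Fin n) 𝕜),
      StrictMono φ ∧ Tendsto lam atTop (𝓝 0) ∧ v ≠ 0 ∧ v ^ n = 0 ∧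
      Tendsto (fun j => h (φ j) * (lam j • t) * (h (φ j))⁻¹) atTop (𝓝 v) :=
  statement0_general t h hSL hdiv
end

section
/- Let n ≥ 1 and let t be an n×n real matrix with trace 0. Suppose (h_α)_{α∈ℕ} is a sequence in SL_n(ℝ) such that ‖h_α t h_α⁻¹‖ → ∞ as α → ∞. Then there exist a strictly increasing sequence of indices (α_j), a sequence of real numbers λ_j → 0, and a nonzero nilpotent n×n real matrix v (v ≠ 0 and v^n = 0) such that h_{α_j} (λ_j t) h_{α_j}⁻¹ → v as j → ∞, and moreover for every real number κ one has h_{α_j} · exp(κ λ_j t) · h_{α_j}⁻¹ → exp(κ v) as j → ∞, where exp denotes the matrix exponential. -/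
/-!
Normalise `g_α = h_α t h_α⁻¹` to the unit sphere: by compactness `‖g_α‖⁻¹ g_α` converges along a
subsequence to some `v` with `‖v‖ = 1`. Conjugation preserves characteristic polynomials, so `v`
has the same characteristic polynomial as the limit of `‖g_α‖⁻¹ t`, namely `Xⁿ`, and `v` is
nilpotent by Cayley–Hamilton. The exponentials converge because `exp` commutes with conjugation
and is continuous.
-/

open Filter Topology Matrix

attribute [local instance] Matrix.normedAddCommGroup Matrix.normedSpace

theorem exists_subseq_tendsto_inv_norm_smul {E : Type*} [NormedAddCommGroup E]
    [NormedSpace ℝ E] [ProperSpace E] {g : ℕ → E}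
    (hg : Tendsto (fun α => ‖g α‖) atTop atTop) :
    ∃ (φ : ℕ → ℕ) (v : E), StrictMono φ ∧ ‖v‖ = 1 ∧
      Tendsto (fun j => ‖g (φ j)‖⁻¹ • g (φ j)) atTop (𝓝 v) := by
  have hball : ∀ α, ‖g α‖⁻¹ • g α ∈ Metric.closedBall (0 : E) 1 := fun α => by
    simpa only [mem_closedBall_zero_iff, norm_smul, norm_inv, norm_norm] using
      inv_mul_le_one_of_le₀ le_rfl (norm_nonneg (g α))
  obtain ⟨v, -, φ, hφ, hv⟩ := (isCompact_closedBall (0 : E) 1).tendsto_subseq hball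
  refine ⟨φ, v, hφ, tendsto_nhds_unique hv.norm (tendsto_const_nhds.congr' ?_), hv⟩
  filter_upwards [(hg.comp hφ.tendsto_atTop).eventually_gt_atTop 0] with j hj
  rw [Function.comp_apply, norm_smul, norm_inv, norm_norm]
  exact (inv_mul_cancel₀ hj.ne').symm

section Conjugation

variable {m R : Type*} [Fintype m] [DecidableEq m]

theorem Matrix.conj_smul [CommRing R] (h t : Matrix m m R) (c : R) :
    h * (c • t) * h⁻¹ = c • (h * t * h⁻¹) := by
  rw [mul_smul_comm, smul_mul_assoc]

theorem Matrix.charpoly_conj [CommRing R] {h : Matrix m m R} (hh : IsUnit h) (t : Matrix m m R) :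
    (h * t * h⁻¹).charpoly = t.charpoly := by
  rw [charpoly_mul_comm, ← mul_assoc, nonsing_inv_mul h ((isUnit_iff_isUnit_det h).1 hh), one_mul]

theorem Matrix.continuous_eval_charpoly [CommRing R] [TopologicalSpace R] [IsTopologicalRing R]
    (x : R) : Continuous fun M : Matrix m m R => M.charpoly.eval x := by
  simp only [eval_charpoly]
  fun_prop

theorem Matrix.pow_card_eq_zero_of_tendsto_conj {K ι : Type*} [Field K] [Infinite K]
    [TopologicalSpace K] [IsTopologicalRing K] [T2Space K] {l : Filter ι} [l.NeBot]
    {h s : ι → Matrix m m K} {v : Matrix m m K} (hh : ∀ i, IsUnit (h i))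
    (hs : Tendsto s l (𝓝 0)) (hv : Tendsto (fun i => h i * s i * (h i)⁻¹) l (𝓝 v)) :
    v ^ Fintype.card m = 0 := by
  have hcharpoly : v.charpoly = Polynomial.X ^ Fintype.card m := by
    refine Polynomial.funext fun x => tendsto_nhds_unique
      ((continuous_eval_charpoly x).continuousAt.tendsto.comp hv) ?_
    rw [← charpoly_zero]
    refine ((continuous_eval_charpoly x).continuousAt.tendsto.comp hs).congr fun i => ?_
    simp only [Function.comp_apply, charpoly_conj (hh i)]
  simpa [hcharpoly] using v.aeval_self_charpoly

theorem Matrix.continuous_exp [RCLike R] :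
    Continuous (NormedSpace.exp : Matrix m m R → Matrix m m R) := by
  open scoped Matrix.Norms.Operator in
  have := FiniteDimensional.complete R (Matrix m m R)
  exact NormedSpace.exp_continuous

theorem Matrix.tendsto_conj_exp_smul [RCLike R] {ι : Type*} {l : Filter ι}
    {h : ι → Matrix m m R} {c : ι → R} {t v : Matrix m m R} (hh : ∀ i, IsUnit (h i))
    (hv : Tendsto (fun i => h i * (c i • t) * (h i)⁻¹) l (𝓝 v)) (κ : R) :
    Tendsto (fun i => h i * NormedSpace.exp ((κ * c i) • t) * (h i)⁻¹) l
      (𝓝 (NormedSpace.exp (κ • v))) := by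
  refine (continuous_exp.continuousAt.tendsto.comp (hv.const_smul κ)).congr fun i => ?_
  rw [Function.comp_apply, ← conj_smul, ← exp_conj _ _ (hh i), mul_smul]

end Conjugation

theorem statement1_general {n : ℕ} (t : Matrix (Fin n) (Fin n) ℝ)
    (h : ℕ → Matrix (Fin n) (Fin n) ℝ) (hSL : ∀ α, (h α).det = 1)
    (hdiv : Tendsto (fun α => ‖h α * t * (h α)⁻¹‖) atTop atTop) :
    ∃ (φ : ℕ → ℕ) (lam : ℕ → ℝ) (v : Matrix (Fin n) (Fin n) ℝ),
      StrictMono φ ∧ Tendsto lam atTop (𝓝 0) ∧ v ≠ 0 ∧ v ^ n = 0 ∧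
      Tendsto (fun j => h (φ j) * (lam j • t) * (h (φ j))⁻¹) atTop (𝓝 v) ∧
      ∀ κ : ℝ,
        Tendsto (fun j => h (φ j) * NormedSpace.exp ((κ * lam j) • t) * (h (φ j))⁻¹)
          atTop (𝓝 (NormedSpace.exp (κ • v))) := by
  have hunit : ∀ α, IsUnit (h α) := fun α => (isUnit_iff_isUnit_det _).2 (by simp [hSL α])
  obtain ⟨φ, v, hφ, hv, hconv⟩ := exists_subseq_tendsto_inv_norm_smul hdiv
  set lam := fun j => ‖h (φ j) * t * (h (φ j))⁻¹‖⁻¹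
  have hconj : Tendsto (fun j => h (φ j) * (lam j • t) * (h (φ j))⁻¹) atTop (𝓝 v) :=
    hconv.congr fun j => (conj_smul _ _ _).symm
  have hlam : Tendsto lam atTop (𝓝 0) := (hdiv.comp hφ.tendsto_atTop).inv_tendsto_atTop
  have hnil : v ^ n = 0 := by
    simpa using pow_card_eq_zero_of_tendsto_conj (fun j => hunit (φ j))
      (by simpa using hlam.smul_const t) hconj
  exact ⟨φ, lam, v, hφ, hlam, norm_ne_zero_iff.1 (by simp [hv]), hnil, hconj,
    tendsto_conj_exp_smul (fun j => hunit (φ j)) hconj⟩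

/-- **Lemma 9.2 (archimedean case).** If `t` is a traceless real `n × n` matrix and `h α` is a
sequence in `SL_n(ℝ)` with `‖h α * t * (h α)⁻¹‖ → ∞`, then along a subsequence there are scalars
`λ_j → 0` such that `h_{α_j} (λ_j t) h_{α_j}⁻¹` converges to a nonzero nilpotent matrix `v`,
and moreover `h_{α_j} exp(κ λ_j t) h_{α_j}⁻¹ → exp(κ v)` for every real `κ`. -/
theorem statement1 {n : ℕ} (hn : 1 ≤ n) (t : Matrix (Fin n) (Fin n) ℝ)
    (ht : Matrix.trace t = 0)
    (h : ℕ → Matrix (Fin n) (Fin n) ℝ) (hSL : ∀ α, (h α).det = 1)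
    (hdiv : Tendsto (fun α => ‖h α * t * (h α)⁻¹‖) atTop atTop) :
    ∃ (φ : ℕ → ℕ) (lam : ℕ → ℝ) (v : Matrix (Fin n) (Fin n) ℝ),
      StrictMono φ ∧ Tendsto lam atTop (𝓝 0) ∧ v ≠ 0 ∧ v ^ n = 0 ∧
      Tendsto (fun j => h (φ j) * (lam j • t) * (h (φ j))⁻¹) atTop (𝓝 v) ∧
      ∀ κ : ℝ,
        Tendsto (fun j => h (φ j) * NormedSpace.exp ((κ * lam j) • t) * (h (φ j))⁻¹)
          atTop (𝓝 (NormedSpace.exp (κ • v))) :=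
  statement1_general t h hSL hdiv
end

section
/- Let 𝕜 be a normed field, n ≥ 1, and t an n×n matrix over 𝕜. Suppose (g_α) is a sequence of invertible n×n matrices over 𝕜, (λ_α) is a sequence in 𝕜 with λ_α → 0, and the sequence of matrices g_α (λ_α t) g_α⁻¹ converges to a matrix v. Then v is nilpotent: v^n = 0. -/
open Filter Topology Matrix Polynomial

namespace Matrix

variable {ι R n : Type*} [CommRing R] [TopologicalSpace R] [Fintype n] [DecidableEq n]

theorem continuous_charpoly_coeff [IsTopologicalRing R] (k : ℕ) :
    Continuous fun M : Matrix n n R => M.charpoly.coeff k := by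
  have hentries : Continuous fun (M : Matrix n n R) (ij : n × n) => M ij.1 ij.2 :=
    continuous_pi fun ij => continuous_apply_apply ij.1 ij.2
  have huniv : (fun M : Matrix n n R => M.charpoly.coeff k) =
      fun M => MvPolynomial.eval (fun ij : n × n => M ij.1 ij.2) ((charpoly.univ R n).coeff k) :=
    funext fun M => by rw [MvPolynomial.eval, charpoly.univ_coeff_eval₂Hom]; rfl
  rw [huniv]
  exact (MvPolynomial.continuous_eval _).comp hentries

theorem charpoly_eq_of_tendsto [IsTopologicalRing R] [T2Space R] {l : Filter ι} [l.NeBot]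
    {a b : ι → Matrix n n R} {v w : Matrix n n R} (ha : Tendsto a l (𝓝 v))
    (hb : Tendsto b l (𝓝 w)) (hab : ∀ i, (a i).charpoly = (b i).charpoly) :
    v.charpoly = w.charpoly := by
  ext k
  have hb' := ((continuous_charpoly_coeff k).tendsto w).comp hb
  simp only [Function.comp_def, ← hab] at hb'
  exact tendsto_nhds_unique (((continuous_charpoly_coeff k).tendsto v).comp ha) hb'

end Matrix

attribute [local instance] Matrix.normedAddCommGroup

theorem statement2_general {𝕜 : Type*} [NormedField 𝕜] {n : ℕ}
    (t : Matrix (Fin n) (Fin n) 𝕜) (g : ℕ → Matrix (Fin n) (Fin n) 𝕜)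
    (hg : ∀ α, IsUnit (g α)) (lam : ℕ → 𝕜) (hlam : Tendsto lam atTop (𝓝 0))
    (v : Matrix (Fin n) (Fin n) 𝕜)
    (hconv : Tendsto (fun α => g α * (lam α • t) * (g α)⁻¹) atTop (𝓝 v)) :
    v ^ n = 0 := by
  have hscaled : Tendsto (fun α => lam α • t) atTop (𝓝 0) := by
    simpa using hlam.smul_const t
  have hconj : ∀ α, (g α * (lam α • t) * (g α)⁻¹).charpoly = (lam α • t).charpoly := fun α => by
    simpa using charpoly_units_conj (hg α).unit (lam α • t)
  have hcharpoly : v.charpoly = X ^ n := by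
    simpa using charpoly_eq_of_tendsto hconv hscaled hconj
  simpa [hcharpoly] using aeval_self_charpoly v

/-- Intermediate claim in the proof of Lemma 9.2: a limit of conjugates
`g α * (λ_α • t) * (g α)⁻¹` with `λ_α → 0` is a nilpotent matrix. -/
theorem statement2 {𝕜 : Type*} [NormedField 𝕜] {n : ℕ} (hn : 1 ≤ n)
    (t : Matrix (Fin n) (Fin n) 𝕜) (g : ℕ → Matrix (Fin n) (Fin n) 𝕜)
    (hg : ∀ α, IsUnit (g α)) (lam : ℕ → 𝕜) (hlam : Tendsto lam atTop (𝓝 0))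
    (v : Matrix (Fin n) (Fin n) 𝕜)
    (hconv : Tendsto (fun α => g α * (lam α • t) * (g α)⁻¹) atTop (𝓝 v)) :
    v ^ n = 0 :=
  statement2_general t g hg lam hlam v hconv
end

section
/- Let n ≥ 1 and let t be an n×n real matrix of the form t = p d p⁻¹, where p is an invertible n×n real matrix and d is a diagonal matrix whose diagonal entries are integers summing to zero (so t is the differential at 1 of a cocharacter of SL_n). Then for every r > 0 there exists C > 0 with the following property: for every g ∈ SL_n(ℝ) with ‖g t g⁻¹‖ ≤ r there exists h ∈ SL_n(ℝ) with ‖h‖ ≤ C and h t h⁻¹ = g t g⁻¹. -/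
/-!
The matrix `t` is diagonalizable with eigenvalues in the finite set `s = {δ i}`, so every `x` in its
orbit is annihilated by `∏_{ν ∈ s} (X - ν)`, and the Lagrange basis polynomials `L_μ` give
projections `Q_μ = L_μ(x)` with `∑ Q_μ = 1` and `x Q_μ = μ Q_μ`; for `‖x‖ ≤ r` they are uniformly
bounded. Expanding `1 = det (∑ Q_μ)` multilinearly in the columns, some matrix `H` whose `j`-th
column is the `j`-th column of `Q_{f j}` has `|det H| ≥ |s|⁻ⁿ`. Its columns are eigenvectors, so
`x H = H diag(f)`; hence `diag(f)` is conjugate to `t`, and since `f` ranges over the finite set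
`sⁿ`, the conjugators `c` with `c diag(f) = t c` can be fixed once and for all. Then `h = H E c⁻¹`,
with `E` a diagonal matrix correcting the determinant, conjugates `t` to `x` and is bounded in terms
of `‖H‖`, `|det H|⁻¹` and the finitely many `c`.
-/

attribute [local instance] Matrix.normedAddCommGroup

attribute [local instance] Matrix.normedSpace

open Matrix Polynomial

theorem SemiconjBy.aeval {R A : Type*} [CommSemiring R] [Semiring A] [Algebra R A] {u a b : A}
    (h : SemiconjBy u a b) (q : R[X]) : SemiconjBy u (aeval a q) (aeval b q) := by
  induction q using Polynomial.induction_on' with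
  | add p q hp hq => simpa only [map_add] using hp.add_right hq
  | monomial k c =>
    simp only [aeval_monomial]
    exact SemiconjBy.mul_right (Algebra.commute_algebraMap_right c u) (h.pow_right k)

theorem IsConj.aeval_eq_zero {R A : Type*} [CommSemiring R] [Ring A] [Algebra R A] {a b : A}
    (hab : IsConj a b) {q : R[X]} (hq : aeval a q = 0) : aeval b q = 0 := by
  obtain ⟨u, hu⟩ := hab
  have := hu.aeval q
  rwa [SemiconjBy, hq, mul_zero, eq_comm, Units.mul_left_eq_zero] at this

namespace Lagrange

variable {F A : Type*} [Field F] [DecidableEq F] [Ring A] [Algebra F A] {s : Finset F} {x : A}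

theorem mul_aeval_basis (hx : aeval x (nodal s id) = 0) {μ : F} (hμ : μ ∈ s) :
    x * aeval x (Lagrange.basis s id μ) = μ • aeval x (Lagrange.basis s id μ) := by
  have hdvd : (X - C μ) * Lagrange.basis s id μ = C (nodalWeight s id μ) * nodal s id := by
    rw [basis_eq_prod_sub_inv_mul_nodal_div hμ, ← nodal_erase_eq_nodal_div hμ,
      nodal_eq_mul_nodal_erase hμ, id_eq]
    ring
  have := congrArg (aeval x) hdvd
  rwa [map_mul, map_mul, hx, mul_zero, map_sub, aeval_X, aeval_C, sub_mul, sub_eq_zero,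
    ← Algebra.smul_def] at this

theorem sum_aeval_basis (hs : s.Nonempty) : ∑ μ ∈ s, aeval x (Lagrange.basis s id μ) = 1 := by
  rw [← map_sum, sum_basis (Set.injOn_id _) hs, map_one]

end Lagrange

theorem Finset.exists_uniform_bound_of_witnesses {ι β : Type*} (s : Finset ι) (P : ι → β → Prop)
    (F : β → ℝ) : ∃ K, ∀ i ∈ s, (∃ b, P i b) → ∃ b, P i b ∧ F b ≤ K := by
  classical
  refine ⟨∑ i ∈ s, if h : ∃ b, P i b then |F h.choose| else 0, fun i hi hP =>
    ⟨hP.choose, hP.choose_spec, ?_⟩⟩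
  calc F hP.choose ≤ if h : ∃ b, P i b then |F h.choose| else 0 := by
        rw [dif_pos hP]; exact le_abs_self _
    _ ≤ ∑ i ∈ s, if h : ∃ b, P i b then |F h.choose| else 0 :=
        Finset.single_le_sum (f := fun i => if h : ∃ b, P i b then |F h.choose| else 0)
          (fun j _ => by split_ifs <;> simp) hi

namespace Matrix

variable {l m n R : Type*}

theorem norm_mul_le_card_mul [Fintype l] [Fintype m] [Fintype n] [NonUnitalNormedRing R]
    (A : Matrix l m R) (B : Matrix m n R) : ‖A * B‖ ≤ Fintype.card m * ‖A‖ * ‖B‖ := by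
  rw [norm_le_iff (by positivity)]
  intro i j
  calc ‖(A * B) i j‖ = ‖∑ k, A i k * B k j‖ := rfl
    _ ≤ ∑ k, ‖A i k * B k j‖ := norm_sum_le _ _
    _ ≤ ∑ _k : m, ‖A‖ * ‖B‖ := by
        gcongr with k
        exact (norm_mul_le _ _).trans (mul_le_mul (norm_entry_le_entrywise_sup_norm A)
          (norm_entry_le_entrywise_sup_norm B) (norm_nonneg _) (norm_nonneg _))
    _ = Fintype.card m * ‖A‖ * ‖B‖ := by simp [mul_assoc]

theorem aeval_diagonal_nodal [Fintype n] [DecidableEq n] [Field R] {s : Finset R} {v : n → R}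
    (hv : ∀ i, v i ∈ s) : aeval (diagonal v) (Lagrange.nodal s id) = 0 := by
  rw [← diagonalAlgHom_apply R, aeval_algHom_apply, aeval_pi_apply]
  have hroot (i : n) : eval (v i) (Lagrange.nodal s id) = 0 :=
    Lagrange.eval_nodal_at_node (v := id) (hv i)
  simp [hroot]

theorem semiconjBy_iff_mul_mul_nonsing_inv_eq [Fintype n] [DecidableEq n] [CommRing R]
    {A a b : Matrix n n R} (hA : IsUnit A.det) : SemiconjBy A a b ↔ A * a * A⁻¹ = b := by
  constructor
  · intro h
    rw [h.eq, mul_nonsing_inv_cancel_right _ _ hA]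
  · rintro rfl
    exact (nonsing_inv_mul_cancel_right _ _ hA).symm

theorem isConj_of_semiconjBy [Fintype n] [DecidableEq n] [CommRing R] {A a b : Matrix n n R}
    (h : SemiconjBy A a b) (hA : IsUnit A.det) : IsConj a b := by
  obtain ⟨u, rfl⟩ := (isUnit_iff_isUnit_det A).mpr hA
  exact ⟨u, h⟩

theorem isConj_mul_mul_nonsing_inv [Fintype n] [DecidableEq n] [CommRing R] {A : Matrix n n R}
    (a : Matrix n n R) (hA : IsUnit A.det) : IsConj a (A * a * A⁻¹) :=
  isConj_of_semiconjBy ((semiconjBy_iff_mul_mul_nonsing_inv_eq hA).mpr rfl) hA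

section

variable [Fintype n]

def pickColumns {ι : Type*} (Q : ι → Matrix n n R) (f : n → ι) : Matrix n n R :=
  of fun i j => Q (f j) i j

theorem det_sum_eq_sum_det_pickColumns [DecidableEq n] [CommRing R] {ι : Type*} (s : Finset ι)
    (Q : ι → Matrix n n R) :
    (∑ μ ∈ s, Q μ).det = ∑ f ∈ Fintype.piFinset fun _ : n => s, (pickColumns Q f).det := by
  have hexpand := (detRowAlternating : (n → R) [⋀^n]→ₗ[R] R).toMultilinearMap.map_sum_finset
    (fun j μ i => Q μ i j) (fun _ => s)
  have hcols : (fun j => ∑ μ ∈ s, fun i => Q μ i j) = (∑ μ ∈ s, Q μ)ᵀ := by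
    ext j i
    simp [Finset.sum_apply, Matrix.sum_apply]
  rw [hcols] at hexpand
  rw [← det_transpose]
  exact hexpand.trans (Finset.sum_congr rfl fun f _ => det_transpose (pickColumns Q f))

theorem exists_inv_card_le_abs_det_pickColumns [DecidableEq n] {ι : Type*} (s : Finset ι)
    (Q : ι → Matrix n n ℝ) (hQ : ∑ μ ∈ s, Q μ = 1) :
    ∃ f ∈ Fintype.piFinset (fun _ : n => s),
      ((Fintype.piFinset fun _ : n => s).card : ℝ)⁻¹ ≤ |(pickColumns Q f).det| := by
  set T := Fintype.piFinset fun _ : n => s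
  have hsum : ∑ f ∈ T, (pickColumns Q f).det = 1 := by
    rw [← det_sum_eq_sum_det_pickColumns, hQ, det_one]
  have hT : T.Nonempty := Finset.nonempty_of_sum_ne_zero (hsum ▸ one_ne_zero)
  refine Finset.exists_le_of_sum_le hT ?_
  calc ∑ _f ∈ T, (T.card : ℝ)⁻¹ = |∑ f ∈ T, (pickColumns Q f).det| := by
        simp [hsum, hT.card_pos.ne']
    _ ≤ ∑ f ∈ T, |(pickColumns Q f).det| := Finset.abs_sum_le_sum_abs _ _

theorem semiconjBy_pickColumns_diagonal [DecidableEq n] [CommRing R] {Q : R → Matrix n n R}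
    {f : n → R} {x : Matrix n n R} (hQ : ∀ j, x * Q (f j) = f j • Q (f j)) :
    SemiconjBy (pickColumns Q f) (diagonal f) x := by
  rw [SemiconjBy]
  ext i j
  rw [mul_diagonal]
  simpa [pickColumns, mul_apply, mul_comm] using (congrFun (congrFun (hQ j) i) j).symm

theorem norm_pickColumns_le [NormedAddCommGroup R] {ι : Type*} {Q : ι → Matrix n n R}
    {f : n → ι} {B : ℝ} (hB0 : 0 ≤ B) (hB : ∀ j, ‖Q (f j)‖ ≤ B) : ‖pickColumns Q f‖ ≤ B := by
  rw [norm_le_iff hB0]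
  exact fun _ j => (norm_entry_le_entrywise_sup_norm (Q (f j))).trans (hB j)

theorem exists_det_diagonal_eq [DecidableEq n] [Nonempty n] [NormedField R] (a : R) :
    ∃ v : n → R, (diagonal v).det = a ∧ ‖diagonal v‖ ≤ max 1 ‖a‖ := by
  let i₀ := Classical.arbitrary n
  refine ⟨Function.update 1 i₀ a, ?_, ?_⟩
  · rw [det_diagonal, Finset.prod_update_of_mem (Finset.mem_univ _)]
    simp
  · rw [norm_diagonal, pi_norm_le_iff_of_nonneg (by positivity)]
    intro i
    rcases eq_or_ne i i₀ with rfl | hi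
    · simp
    · simp [Function.update_of_ne hi]

theorem exists_norm_aeval_le [DecidableEq n] {ι : Type*} (s : Finset ι) (p : ι → ℝ[X]) (r : ℝ) :
    ∃ B, 0 ≤ B ∧ ∀ x : Matrix n n ℝ, ‖x‖ ≤ r → ∀ i ∈ s, ‖aeval x (p i)‖ ≤ B := by
  have hcont : Continuous fun x : Matrix n n ℝ => ∑ i ∈ s, ‖aeval x (p i)‖ := by fun_prop
  obtain ⟨B, hB⟩ := (isCompact_closedBall (0 : Matrix n n ℝ) r).exists_bound_of_continuousOn
    hcont.continuousOn
  refine ⟨max B 0, le_max_right _ _, fun x hx i hi => ?_⟩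
  calc ‖aeval x (p i)‖ ≤ ∑ i ∈ s, ‖aeval x (p i)‖ :=
        Finset.single_le_sum (f := fun i => ‖aeval x (p i)‖) (fun _ _ => norm_nonneg _) hi
    _ ≤ ‖∑ i ∈ s, ‖aeval x (p i)‖‖ := Real.le_norm_self _
    _ ≤ B := hB x (mem_closedBall_zero_iff.mpr hx)
    _ ≤ max B 0 := le_max_left _ _

theorem exists_det_eq_one_semiconjBy [DecidableEq n] [Nonempty n] {x t H : Matrix n n ℝ} {D : n → ℝ}
    (hH : SemiconjBy H (diagonal D) x) (hHdet : H.det ≠ 0) (c : (Matrix n n ℝ)ˣ)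
    (hc : SemiconjBy (c : Matrix n n ℝ) (diagonal D) t) :
    ∃ h : Matrix n n ℝ, h.det = 1 ∧ SemiconjBy h t x ∧
      ‖h‖ ≤ Fintype.card n ^ 2 * ‖H‖ * max 1 |(c : Matrix n n ℝ).det / H.det| *
        ‖(↑c⁻¹ : Matrix n n ℝ)‖ := by
  obtain ⟨v, hv, hvnorm⟩ := exists_det_diagonal_eq (n := n) ((c : Matrix n n ℝ).det / H.det)
  have hcdet : (↑c⁻¹ : Matrix n n ℝ).det * (c : Matrix n n ℝ).det = 1 := by
    rw [← det_mul, Units.inv_mul, det_one]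
  refine ⟨H * diagonal v * (↑c⁻¹ : Matrix n n ℝ), ?_, ?_, ?_⟩
  · rw [det_mul, det_mul, hv, mul_div_cancel₀ _ hHdet, mul_comm, hcdet]
  · exact (hH.mul_left (commute_diagonal v D)).mul_left hc.units_inv_symm_left
  · calc ‖H * diagonal v * (↑c⁻¹ : Matrix n n ℝ)‖
        ≤ Fintype.card n * ‖H * diagonal v‖ * ‖(↑c⁻¹ : Matrix n n ℝ)‖ :=
          norm_mul_le_card_mul _ _
      _ ≤ Fintype.card n * (Fintype.card n * ‖H‖ * ‖diagonal v‖) *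
            ‖(↑c⁻¹ : Matrix n n ℝ)‖ := by
          gcongr; exact norm_mul_le_card_mul _ _
      _ ≤ Fintype.card n * (Fintype.card n * ‖H‖ * max 1 |(c : Matrix n n ℝ).det / H.det|) *
            ‖(↑c⁻¹ : Matrix n n ℝ)‖ := by
          gcongr; exact hvnorm
      _ = _ := by ring

theorem exists_bounded_conjugator [DecidableEq n] [Nonempty n] {s : Finset ℝ} {t : Matrix n n ℝ}
    (ht : aeval t (Lagrange.nodal s id) = 0) (r : ℝ) :
    ∃ C, ∀ x, IsConj t x → ‖x‖ ≤ r →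
      ∃ h : Matrix n n ℝ, h.det = 1 ∧ ‖h‖ ≤ C ∧ SemiconjBy h t x := by
  have hs : s.Nonempty := Finset.nonempty_iff_ne_empty.mpr fun h => by simp [h] at ht
  obtain ⟨B, hB0, hB⟩ := exists_norm_aeval_le (n := n) s (Lagrange.basis s id) r
  set T := Fintype.piFinset fun _ : n => s
  obtain ⟨K, hK⟩ := T.exists_uniform_bound_of_witnesses
    (fun f (c : (Matrix n n ℝ)ˣ) => SemiconjBy (c : Matrix n n ℝ) (diagonal f) t)
    (fun c => max ‖(↑c⁻¹ : Matrix n n ℝ)‖ |(c : Matrix n n ℝ).det|)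
  refine ⟨Fintype.card n ^ 2 * B * max 1 (K * T.card) * K, fun x htx hx => ?_⟩
  set Q : ℝ → Matrix n n ℝ := fun μ => aeval x (Lagrange.basis s id μ)
  have hxs : aeval x (Lagrange.nodal s id) = 0 := htx.aeval_eq_zero ht
  obtain ⟨f, hfT, hdetH⟩ :=
    exists_inv_card_le_abs_det_pickColumns s Q (Lagrange.sum_aeval_basis hs)
  have hf : ∀ j, f j ∈ s := Fintype.mem_piFinset.mp hfT
  have hT : (0 : ℝ) < T.card := Nat.cast_pos.mpr (Finset.card_pos.mpr ⟨f, hfT⟩)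
  set H := pickColumns Q f
  have hH : SemiconjBy H (diagonal f) x :=
    semiconjBy_pickColumns_diagonal fun j => Lagrange.mul_aeval_basis hxs (hf j)
  have hdetH_pos : 0 < |H.det| := (inv_pos.mpr hT).trans_le hdetH
  obtain ⟨c, hc, hcK⟩ := hK f hfT
    ((isConj_of_semiconjBy hH (abs_pos.mp hdetH_pos).isUnit).trans htx.symm)
  obtain ⟨h, h1, hsemi, hnorm⟩ := exists_det_eq_one_semiconjBy hH (abs_pos.mp hdetH_pos) c hc
  refine ⟨h, h1, hnorm.trans ?_, hsemi⟩
  have hK0 : 0 ≤ K := (norm_nonneg _).trans ((le_max_left _ _).trans hcK)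
  have hdiv : |(c : Matrix n n ℝ).det / H.det| ≤ K * T.card := by
    rw [abs_div, div_le_iff₀ hdetH_pos]
    calc |(c : Matrix n n ℝ).det| ≤ K := (le_max_right _ _).trans hcK
      _ ≤ K * (T.card * |H.det|) :=
        le_mul_of_one_le_right hK0 ((inv_le_iff_one_le_mul₀' hT).mp hdetH)
      _ = K * T.card * |H.det| := by ring
  gcongr
  · exact norm_pickColumns_le hB0 fun j => hB x hx (f j) (hf j)
  · exact (le_max_left _ _).trans hcK

end

end Matrix

theorem statement4_general {n : ℕ} (hn : 1 ≤ n) (p : Matrix (Fin n) (Fin n) ℝ) (hp : IsUnit p)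
    (δ : Fin n → ℤ)
    (t : Matrix (Fin n) (Fin n) ℝ)
    (htdef : t = p * Matrix.diagonal (fun i => (δ i : ℝ)) * p⁻¹) :
    ∀ r : ℝ, 0 < r → ∃ C : ℝ, 0 < C ∧
      ∀ g : Matrix (Fin n) (Fin n) ℝ, g.det = 1 → ‖g * t * g⁻¹‖ ≤ r →
        ∃ h : Matrix (Fin n) (Fin n) ℝ, h.det = 1 ∧ ‖h‖ ≤ C ∧
          h * t * h⁻¹ = g * t * g⁻¹ := by
  intro r _
  have : Nonempty (Fin n) := ⟨⟨0, hn⟩⟩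
  have ht : aeval t (Lagrange.nodal (Finset.univ.image fun i => (δ i : ℝ)) id) = 0 := by
    rw [htdef]
    exact (isConj_mul_mul_nonsing_inv _ ((isUnit_iff_isUnit_det p).mp hp)).aeval_eq_zero
      (aeval_diagonal_nodal fun i => Finset.mem_image_of_mem _ (Finset.mem_univ i))
  obtain ⟨C, hC⟩ := exists_bounded_conjugator ht r
  refine ⟨max C 1, by positivity, fun g hg hgr => ?_⟩
  obtain ⟨h, hdet, hhC, hh⟩ := hC _ (isConj_mul_mul_nonsing_inv t (hg ▸ isUnit_one)) hgr
  exact ⟨h, hdet, hhC.trans (le_max_left _ _),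
    (semiconjBy_iff_mul_mul_nonsing_inv_eq (hdet ▸ isUnit_one)).mp hh⟩

/-- **Lemma 9.1 for `SL_n(ℝ)`.** Let `t = p d p⁻¹` where `d` is diagonal with integer entries
summing to zero (the differential of a cocharacter of `SL_n`). Then points of the adjoint orbit
of `t` of norm at most `r` are achieved by conjugating with elements of `SL_n(ℝ)` of norm
bounded by a constant `C = C(r)`. -/
theorem statement4 {n : ℕ} (hn : 1 ≤ n) (p : Matrix (Fin n) (Fin n) ℝ) (hp : IsUnit p)
    (δ : Fin n → ℤ) (hδ : ∑ i, δ i = 0)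
    (t : Matrix (Fin n) (Fin n) ℝ)
    (htdef : t = p * Matrix.diagonal (fun i => (δ i : ℝ)) * p⁻¹) :
    ∀ r : ℝ, 0 < r → ∃ C : ℝ, 0 < C ∧
      ∀ g : Matrix (Fin n) (Fin n) ℝ, g.det = 1 → ‖g * t * g⁻¹‖ ≤ r →
        ∃ h : Matrix (Fin n) (Fin n) ℝ, h.det = 1 ∧ ‖h‖ ≤ C ∧
          h * t * h⁻¹ = g * t * g⁻¹ :=
  statement4_general hn p hp δ t htdef
end

section
/- Let n ≥ 1 and let a be a diagonal n×n real matrix with strictly positive diagonal entries and determinant 1. Let w be a nonzero n×n real matrix such that w_{ij} = 0 whenever a_{ii} ≤ a_{jj} (so w lies in the expanding part 𝔤_a⁺ of the adjoint action of a on 𝔰𝔩_n(ℝ)). Then there exists an n×n real matrix m with m_{ij} = 0 whenever a_{ii} ≥ a_{jj}, such that u = 1 + m is invertible (u lies in the contracting horospherical subgroup G_a⁻ of SL_n(ℝ)) and the matrix u w u⁻¹ has a nonzero entry at some position (i,j) with a_{ii} < a_{jj} (that is, u w u⁻¹ does not lie in 𝔤_a⁺ + 𝔤_a⁰). -/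
open Matrix

/-! If `w i j ≠ 0` then `a j < a i`, and `u = 1 + E_{ji}` works: `E_{ji}² = 0` gives
`u⁻¹ = 1 - E_{ji}`, and the `(j, i)` entry of `u w u⁻¹` is `w j i + w i i - w j j - w i j = -w i j`,
since the first three entries sit at non-expanding positions. -/

theorem one_add_mul_one_sub_of_mul_self_eq_zero {R : Type*} [Ring R] {m : R} (h : m * m = 0) :
    (1 + m) * (1 - m) = 1 := by
  rw [add_mul, mul_sub, mul_sub, h]
  noncomm_ring

theorem Matrix.one_add_single_mul_mul_one_sub_single_apply {n R : Type*} [Fintype n]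
    [DecidableEq n] [CommRing R] (i j : n) (c : R) (w : Matrix n n R) :
    ((1 + single j i c) * w * (1 - single j i c)) j i =
      w j i + c * w i i - c * w j j - c * c * w i j := by
  have hexpand : (1 + single j i c) * w * (1 - single j i c) =
      w + single j i c * w - w * single j i c - single j i c * (w * single j i c) := by
    noncomm_ring
  rw [hexpand]
  simp only [sub_apply, add_apply, single_mul_apply_same, mul_single_apply_same]
  ring

theorem statement5_general {n : ℕ} (a : Fin n → ℝ) (w : Matrix (Fin n) (Fin n) ℝ) (hw : w ≠ 0)
    (hwplus : ∀ i j, a i ≤ a j → w i j = 0) :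
    ∃ m : Matrix (Fin n) (Fin n) ℝ, (∀ i j, a j ≤ a i → m i j = 0) ∧
      IsUnit (1 + m) ∧
      ∃ i j, a i < a j ∧ ((1 + m) * w * (1 + m)⁻¹) i j ≠ 0 := by
  obtain ⟨i, j, hij⟩ : ∃ i j, w i j ≠ 0 := by
    by_contra! h
    exact hw (Matrix.ext h)
  have hlt : a j < a i := lt_of_not_ge fun hle => hij (hwplus i j hle)
  have hsq : single j i (1 : ℝ) * single j i 1 = 0 :=
    single_mul_single_of_ne _ _ _ _ (fun h => hlt.ne' (congrArg a h)) _
  have hinv : (1 + single j i (1 : ℝ))⁻¹ = 1 - single j i 1 :=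
    inv_eq_right_inv (one_add_mul_one_sub_of_mul_self_eq_zero hsq)
  refine ⟨single j i 1, fun k l hlk => single_apply_of_ne _ _ _ _ _ ?_,
    IsNilpotent.isUnit_one_add ⟨2, by rw [pow_two, hsq]⟩, j, i, hlt, ?_⟩
  · rintro ⟨rfl, rfl⟩
    exact hlt.not_ge hlk
  · rw [hinv, one_add_single_mul_mul_one_sub_single_apply, hwplus j i hlt.le,
      hwplus i i le_rfl, hwplus j j le_rfl]
    simpa using hij

/-- **Lemma 7.2 (shearing lemma) for the adjoint representation of `SL_n(ℝ)`.**
Let `a` be a positive diagonal matrix of determinant one and `w ≠ 0` a matrix supported on the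
expanding positions (`w i j = 0` whenever `a i ≤ a j`).  Then there is a contracting unipotent
element `u = 1 + m` (with `m i j = 0` whenever `a i ≥ a j`) such that `u w u⁻¹` has a nonzero
entry at a contracting position, i.e. `u w u⁻¹ ∉ 𝔤_a⁺ + 𝔤_a⁰`. -/
theorem statement5 {n : ℕ} (hn : 1 ≤ n) (a : Fin n → ℝ) (ha : ∀ i, 0 < a i)
    (hdet : ∏ i, a i = 1) (w : Matrix (Fin n) (Fin n) ℝ) (hw : w ≠ 0)
    (hwplus : ∀ i j, a i ≤ a j → w i j = 0) :
    ∃ m : Matrix (Fin n) (Fin n) ℝ, (∀ i j, a j ≤ a i → m i j = 0) ∧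
      IsUnit (1 + m) ∧
      ∃ i j, a i < a j ∧ ((1 + m) * w * (1 + m)⁻¹) i j ≠ 0 :=
  statement5_general a w hw hwplus
end

section
/- Let G be a topological group, H a complex Hilbert space, and π a group homomorphism from G into the group of linear isometric automorphisms (unitary operators) of H such that for every vector f ∈ H the orbit map g ↦ π(g)f is continuous from G to H. Suppose a, u ∈ G satisfy a^n u a^{−n} → e (the identity of G) as n → ∞ along the natural numbers. If f ∈ H satisfies π(a) f = c • f for some complex scalar c with |c| = 1, then π(u) f = f. -/
open Filter Topology

/-! Since `π a` is an isometry scaling `f` by a unimodular `c`, conjugating by `a` does not change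
how far a group element moves `f`: `‖π (aᵐ u a⁻ᵐ) f - f‖ = ‖π u f - f‖`
for every `m`. As `m → ∞` the left side tends to `‖π 1 f - f‖ = 0` by strong continuity, so the
constant right side vanishes. -/

section

variable {G 𝕜 E : Type*} [Group G] [NormedField 𝕜] [SeminormedAddCommGroup E] [NormedSpace 𝕜 E]
  (π : G →* (E ≃ₗᵢ[𝕜] E)) {a : G} {f : E} {c : 𝕜}

theorem map_pow_apply_of_apply_eq_smul (h : π a f = c • f) (m : ℕ) :
    π (a ^ m) f = c ^ m • f := by
  induction m with
  | zero => simp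
  | succ m ih =>
    rw [pow_succ, map_mul, LinearIsometryEquiv.coe_mul, Function.comp_apply, h, map_smul, ih,
      smul_smul, pow_succ']

theorem map_inv_apply_of_apply_eq_smul (hc : c ≠ 0) (h : π a f = c • f) :
    π a⁻¹ f = c⁻¹ • f := by
  rw [eq_inv_smul_iff₀ hc, ← map_smul, ← h, map_inv, LinearIsometryEquiv.coe_inv,
    LinearIsometryEquiv.symm_apply_apply]

theorem norm_map_conj_apply_sub (hc : ‖c‖ = 1) (h : π a f = c • f) (g : G) :
    ‖π (a * g * a⁻¹) f - f‖ = ‖π g f - f‖ := by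
  have hc₀ : c ≠ 0 := norm_ne_zero_iff.mp (hc ▸ one_ne_zero)
  calc ‖π (a * g * a⁻¹) f - f‖ = ‖c⁻¹ • (π a (π g f) - π a f)‖ := by
        rw [map_mul, map_mul, LinearIsometryEquiv.coe_mul, LinearIsometryEquiv.coe_mul,
          Function.comp_apply, Function.comp_apply,
          map_inv_apply_of_apply_eq_smul π hc₀ h, map_smul, map_smul, smul_sub, h,
          inv_smul_smul₀ hc₀]
    _ = ‖π g f - f‖ := by
        rw [norm_smul, ← map_sub, LinearIsometryEquiv.norm_map, norm_inv, hc, inv_one, one_mul]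

end

theorem statement6_general {G : Type*} [Group G] [TopologicalSpace G]
    {H : Type*} [NormedAddCommGroup H] [InnerProductSpace ℂ H]
    (π : G →* (H ≃ₗᵢ[ℂ] H))
    (hcont : ∀ f : H, Continuous fun g : G => (π g) f)
    (a u : G) (hconj : Tendsto (fun m : ℕ => a ^ m * u * a⁻¹ ^ m) atTop (𝓝 1))
    (f : H) (c : ℂ) (hc : ‖c‖ = 1) (heig : (π a) f = c • f) :
    (π u) f = f := by
  have hdist : ∀ m : ℕ, ‖π (a ^ m * u * a⁻¹ ^ m) f - f‖ = ‖π u f - f‖ := fun m => by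
    rw [inv_pow]
    exact norm_map_conj_apply_sub π (by rw [norm_pow, hc, one_pow])
      (map_pow_apply_of_apply_eq_smul π heig m) u
  have hlim : Tendsto (fun m : ℕ => π (a ^ m * u * a⁻¹ ^ m) f) atTop (𝓝 f) := by
    simpa only [Function.comp_def, map_one, LinearIsometryEquiv.coe_one, id] using
      ((hcont f).tendsto 1).comp hconj
  have hzero : ‖π u f - f‖ = 0 := by
    have h := (hlim.sub_const f).norm
    rw [sub_self, norm_zero] at h
    simp only [hdist] at h
    exact tendsto_nhds_unique tendsto_const_nhds h
  exact sub_eq_zero.mp (norm_eq_zero.mp hzero)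

/-- **Mautner phenomenon** (as in the proof of Proposition 3.2): if `π` is a strongly continuous
unitary representation of a topological group `G` on a complex Hilbert space `H`,
`a, u ∈ G` satisfy `aⁿ u a⁻ⁿ → e`, and `f` is an eigenvector of `π a` with unimodular
eigenvalue, then `f` is fixed by `π u`. -/
theorem statement6 {G : Type*} [Group G] [TopologicalSpace G] [IsTopologicalGroup G]
    {H : Type*} [NormedAddCommGroup H] [InnerProductSpace ℂ H] [CompleteSpace H]
    (π : G →* (H ≃ₗᵢ[ℂ] H))
    (hcont : ∀ f : H, Continuous fun g : G => (π g) f)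
    (a u : G) (hconj : Tendsto (fun m : ℕ => a ^ m * u * a⁻¹ ^ m) atTop (𝓝 1))
    (f : H) (c : ℂ) (hc : ‖c‖ = 1) (heig : (π a) f = c • f) :
    (π u) f = f :=
  statement6_general π hcont a u hconj f c hc heig
end

section
/- Let K be a field and L a Lie algebra over K. Suppose (g_λ)_{λ∈ℝ} is a family of K-submodules of L such that ⁅x, y⁆ ∈ g_{λ+μ} whenever x ∈ g_λ and y ∈ g_μ, and such that the submodules g_λ together span L (their supremum as submodules is all of L). Then the Lie subalgebra of L generated by the union of the g_λ over all λ ≠ 0 is a Lie ideal of L: for every z ∈ L and every y in this subalgebra, ⁅z, y⁆ again lies in it. -/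
namespace LieSubalgebra

variable {R L : Type*} [CommRing R] [LieRing L] [LieAlgebra R L]

/-- Since `ad z` is a derivation, it preserves the Lie subalgebra generated by `s` as soon as it
maps `s` into it. -/
theorem mem_normalizer_lieSpan_iff {s : Set L} {z : L} :
    z ∈ (lieSpan R L s).normalizer ↔ ∀ x ∈ s, ⁅z, x⁆ ∈ lieSpan R L s := by
  rw [mem_normalizer_iff]
  refine ⟨fun h x hx => h x (subset_lieSpan hx), fun h y hy => ?_⟩
  induction hy using lieSpan_induction with
  | mem x hx => exact h x hx
  | zero => simpa only [lie_zero] using zero_mem _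
  | add x y _ _ hx hy => simpa only [lie_add] using add_mem hx hy
  | smul a x _ hx => simpa only [lie_smul] using LieSubalgebra.smul_mem _ a hx
  | lie x y hxs hys hx hy =>
    rw [leibniz_lie]
    exact add_mem (lie_mem _ hx hys) (lie_mem _ hxs hy)

variable {ι : Type*} [AddZeroClass ι]

theorem le_normalizer_lieSpan_nonzero_weights (g : ι → Submodule R L)
    (hbracket : ∀ lam mu, ∀ x ∈ g lam, ∀ y ∈ g mu, ⁅x, y⁆ ∈ g (lam + mu)) (lam : ι) :
    g lam ≤ (lieSpan R L (⋃ (mu : ι) (_ : mu ≠ 0), (g mu : Set L))).normalizer.toSubmodule := by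
  intro z hz
  by_cases hlam : lam = 0
  · subst hlam
    refine mem_normalizer_lieSpan_iff.2 fun x hx => subset_lieSpan ?_
    obtain ⟨mu, hmu, hx⟩ : ∃ mu, mu ≠ 0 ∧ x ∈ g mu := by
      simpa only [Set.mem_iUnion, exists_prop, SetLike.mem_coe] using hx
    have hzx : ⁅z, x⁆ ∈ g mu := zero_add mu ▸ hbracket 0 mu z hz x hx
    exact Set.mem_biUnion hmu hzx
  · exact le_normalizer _ (subset_lieSpan (Set.mem_biUnion hlam hz))

end LieSubalgebra

/-- **The Auslander ideal.** If a Lie algebra `L` over a field `K` is spanned by submodules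
`g λ` (indexed by Lyapunov weights `λ ∈ ℝ`) satisfying `⁅g λ, g μ⁆ ⊆ g (λ + μ)`, then the Lie
subalgebra generated by the nonzero weight spaces is a Lie ideal of `L`. -/
theorem statement7 {K : Type*} [Field K] {L : Type*} [LieRing L] [LieAlgebra K L]
    (g : ℝ → Submodule K L)
    (hbracket : ∀ (lam mu : ℝ), ∀ x ∈ g lam, ∀ y ∈ g mu, ⁅x, y⁆ ∈ g (lam + mu))
    (hspan : (⨆ lam : ℝ, g lam) = ⊤) :
    ∀ z : L, ∀ y ∈ LieSubalgebra.lieSpan K L (⋃ (lam : ℝ) (_ : lam ≠ 0), (g lam : Set L)),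
      ⁅z, y⁆ ∈ LieSubalgebra.lieSpan K L (⋃ (lam : ℝ) (_ : lam ≠ 0), (g lam : Set L)) := by
  have hnormalizer : ⊤ ≤ (LieSubalgebra.lieSpan K L
      (⋃ (lam : ℝ) (_ : lam ≠ 0), (g lam : Set L))).normalizer.toSubmodule :=
    hspan ▸ iSup_le (LieSubalgebra.le_normalizer_lieSpan_nonzero_weights g hbracket)
  exact fun z => (LieSubalgebra.mem_normalizer_iff _ z).1 (hnormalizer Submodule.mem_top)
end
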